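/- arXiv:2505.15138 — 4 statements merged into one kernel-verified Lean document; each statement's English description precedes it below -/
import Mathlib

section
/- Let $c_\gamma, \lambda > 0$ with $\lambda \leq 1$ and $c_\gamma \geq \lambda + \sqrt{\lambda^{-2} - 1}$. Then for all $u \in [0,1]$, $c_\gamma u - \sqrt{u(1-u)} + \lambda(1-u) \geq \lambda/2$. -/
/-!
Weighted AM–GM with weight `λ` gives `√(u(1-u)) ≤ (λ(1-u) + λ⁻¹u)/2`, which reduces the claim
to the linear bound `(λ + λ⁻¹)/2 ≤ cγ`. This follows from the hypothesis on `cγ` because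
`√(λ⁻² - 1) = √(1 - λ²)/λ ≥ (1 - λ²)/(2λ) = (λ⁻¹ - λ)/2` for `λ ≤ 1`, and trivially for `λ ≥ 1`.
-/

theorem Real.two_mul_sqrt_mul_le {x y ε : ℝ} (hx : 0 ≤ x) (hy : 0 ≤ y) (hε : 0 < ε) :
    2 * √(x * y) ≤ ε * x + ε⁻¹ * y :=
  calc 2 * √(x * y) = 2 * √x * √y := by rw [Real.sqrt_mul hx, mul_assoc]
    _ ≤ ε * √x ^ 2 + ε⁻¹ * √y ^ 2 := two_mul_le_add_mul_sq hε
    _ = ε * x + ε⁻¹ * y := by rw [Real.sq_sqrt hx, Real.sq_sqrt hy]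

theorem half_add_inv_le_add_sqrt_inv_sq_sub_one {a : ℝ} (ha : 0 < a) :
    (a + a⁻¹) / 2 ≤ a + √(a⁻¹ ^ 2 - 1) := by
  rcases le_total a 1 with ha1 | ha1
  · have hinv : 1 ≤ a⁻¹ := one_le_inv_iff₀.mpr ⟨ha, ha1⟩
    have hprod : a * a⁻¹ = 1 := mul_inv_cancel₀ ha.ne'
    have : (a⁻¹ - a) / 2 ≤ √(a⁻¹ ^ 2 - 1) := by
      refine Real.le_sqrt_of_sq_le ?_
      nlinarith
    linarith
  · have : a⁻¹ ≤ a := (inv_le_one_of_one_le₀ ha1).trans ha1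
    linarith [Real.sqrt_nonneg (a⁻¹ ^ 2 - 1)]

theorem stmt5_general (cγ lam : ℝ) (hlam0 : 0 < lam)
    (hcγ : lam + Real.sqrt (lam⁻¹ ^ 2 - 1) ≤ cγ) :
    ∀ u ∈ Set.Icc (0 : ℝ) 1,
      lam / 2 ≤ cγ * u - Real.sqrt (u * (1 - u)) + lam * (1 - u) := by
  rintro u ⟨hu0, hu1⟩
  have hamgm : 2 * √((1 - u) * u) ≤ lam * (1 - u) + lam⁻¹ * u :=
    Real.two_mul_sqrt_mul_le (sub_nonneg.mpr hu1) hu0 hlam0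
  have hcγ' : (lam + lam⁻¹) / 2 * u ≤ cγ * u :=
    mul_le_mul_of_nonneg_right
      ((half_add_inv_le_add_sqrt_inv_sq_sub_one hlam0).trans hcγ) hu0
  rw [mul_comm u]
  linarith

theorem stmt5 (cγ lam : ℝ) (hc : 0 < cγ) (hlam0 : 0 < lam) (hlam1 : lam ≤ 1)
    (hcγ : lam + Real.sqrt (lam⁻¹ ^ 2 - 1) ≤ cγ) :
    ∀ u ∈ Set.Icc (0 : ℝ) 1,
      lam / 2 ≤ cγ * u - Real.sqrt (u * (1 - u)) + lam * (1 - u) :=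
  stmt5_general cγ lam hlam0 hcγ
end

section
/- Let $M \in \mathbb{R}^{m\times m}$ satisfy $\zeta^\top M \zeta \geq \lambda \|\zeta\|^2$ for all $\zeta \in \mathbb{R}^m$ with $0 < \lambda \leq 1$, let $b \in \mathbb{R}^m$ with $\|b\| \leq 1$, and let $c_\gamma \geq \lambda + \sqrt{\lambda^{-2}-1}$. Define the block matrix $A = \begin{pmatrix} c_\gamma & 0 \\ b & M \end{pmatrix} \in \mathbb{R}^{(1+m)\times(1+m)}$. Then for all $\xi = (\eta, \zeta) \in \mathbb{R}^{1+m}$, $\xi^\top A \xi \geq (\lambda/2)\|\xi\|^2$; in particular $A$ is invertible. -/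
/-!
Writing ξ = (η, ζ), the quadratic form is cγ η² + (ζ ⬝ b) η + ζᵀ M ζ. Cauchy–Schwarz and
‖b‖ ≤ 1 bound the cross term by |η| ‖ζ‖, and the remaining quadratic form in (η, ‖ζ‖)
dominates (λ/2)(η² + ‖ζ‖²) once 1 + λ² ≤ 2λ cγ; this follows from the bound on cγ because
λ √(λ⁻² - 1) = √(1 - λ²) ≥ (1 - λ²)/2. Coercivity makes A injective, hence invertible.
-/

open Matrix

lemma one_sub_sq_le_two_mul_sqrt_inv_sq_sub_one {lam : ℝ} (hlam : 0 < lam) :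
    1 - lam ^ 2 ≤ 2 * lam * √(lam⁻¹ ^ 2 - 1) := by
  -- for `lam > 1` both square roots are junk values `0`
  have hroot : lam * √(lam⁻¹ ^ 2 - 1) = √(1 - lam ^ 2) := by
    rw [show 1 - lam ^ 2 = lam ^ 2 * (lam⁻¹ ^ 2 - 1) by field_simp,
      Real.sqrt_mul (sq_nonneg _), Real.sqrt_sq hlam.le]
  have hle : 1 - lam ^ 2 ≤ √(1 - lam ^ 2) :=
    Real.le_sqrt_self_iff.mpr (by nlinarith [sq_nonneg lam])
  nlinarith [Real.sqrt_nonneg (1 - lam ^ 2)]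

lemma one_add_sq_le_two_mul_mul {lam c : ℝ} (hlam : 0 < lam)
    (hc : lam + √(lam⁻¹ ^ 2 - 1) ≤ c) : 1 + lam ^ 2 ≤ 2 * lam * c := by
  nlinarith [one_sub_sq_le_two_mul_sqrt_inv_sq_sub_one hlam]

lemma dotProduct_sq_le_dotProduct_self_mul_dotProduct_self {n R : Type*} [Fintype n]
    [CommRing R] [LinearOrder R] [IsStrictOrderedRing R] (u v : n → R) :
    (u ⬝ᵥ v) ^ 2 ≤ (u ⬝ᵥ u) * (v ⬝ᵥ v) := by
  simpa only [dotProduct, sq] using Finset.sum_mul_sq_le_sq_mul_sq Finset.univ u v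

lemma sumElim_dotProduct_fromBlocks_mulVec_sumElim {l n R : Type*} [Fintype l] [Fintype n]
    [CommSemiring R] (A : Matrix l l R) (B : Matrix l n R) (C : Matrix n l R) (D : Matrix n n R)
    (x : l → R) (y : n → R) :
    Sum.elim x y ⬝ᵥ fromBlocks A B C D *ᵥ Sum.elim x y =
      x ⬝ᵥ A *ᵥ x + x ⬝ᵥ B *ᵥ y + (y ⬝ᵥ C *ᵥ x + y ⬝ᵥ D *ᵥ y) := by
  simp only [fromBlocks_mulVec, Sum.elim_comp_inl, Sum.elim_comp_inr,
    sumElim_dotProduct_sumElim, dotProduct_add]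

lemma Matrix.isUnit_of_coercive {n : Type*} [Fintype n] [DecidableEq n]
    {A : Matrix n n ℝ} {lam : ℝ} (hlam : 0 < lam)
    (hA : ∀ ξ : n → ℝ, lam * (ξ ⬝ᵥ ξ) ≤ ξ ⬝ᵥ A *ᵥ ξ) : IsUnit A := by
  rw [← mulVec_injective_iff_isUnit]
  intro u v huv
  have hker : A *ᵥ (u - v) = 0 := by rw [mulVec_sub, huv, sub_self]
  have hnonpos : lam * ((u - v) ⬝ᵥ (u - v)) ≤ 0 := by simpa [hker] using hA (u - v)
  have hzero : (u - v) ⬝ᵥ (u - v) = 0 :=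
    le_antisymm (nonpos_of_mul_nonpos_right hnonpos hlam) (dotProduct_self_star_nonneg _)
  exact sub_eq_zero.mp (dotProduct_self_eq_zero.mp hzero)

lemma sumElim_dotProduct_fromBlocks_mulVec_sumElim_of_fin_one {n R : Type*} [Fintype n]
    [CommSemiring R] (c : R) (b : n → R) (M : Matrix n n R) (x : Fin 1 → R) (y : n → R) :
    Sum.elim x y ⬝ᵥ fromBlocks (of fun _ _ => c) 0 (of fun i _ => b i) M *ᵥ Sum.elim x y =
      c * x 0 ^ 2 + (y ⬝ᵥ b) * x 0 + y ⬝ᵥ M *ᵥ y := by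
  rw [sumElim_dotProduct_fromBlocks_mulVec_sumElim, zero_mulVec, dotProduct_zero, add_zero]
  simp only [dotProduct, mulVec, of_apply, Fin.sum_univ_one, Finset.sum_mul, ← mul_assoc]
  ring

lemma half_mul_sq_add_le_of_one_add_sq_le {lam c η s q r : ℝ} (hlam : 0 < lam)
    (hc : 1 + lam ^ 2 ≤ 2 * lam * c) (hs : s ^ 2 ≤ q) (hr : lam * q ≤ r) :
    lam / 2 * (η ^ 2 + q) ≤ c * η ^ 2 + s * η + r := by
  -- `2 lam (rhs - lhs) ≥ (η + lam s) ^ 2`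
  nlinarith [sq_nonneg (η + lam * s), mul_nonneg (sq_nonneg η) (sub_nonneg.2 hc),
    mul_le_mul_of_nonneg_left hs (sq_nonneg lam)]

theorem stmt6_general (m : ℕ) (M : Matrix (Fin m) (Fin m) ℝ) (lam : ℝ)
    (hlam0 : 0 < lam)
    (hM : ∀ ζ : Fin m → ℝ, lam * (ζ ⬝ᵥ ζ) ≤ ζ ⬝ᵥ M.mulVec ζ)
    (b : Fin m → ℝ) (hb : b ⬝ᵥ b ≤ 1)
    (cγ : ℝ) (hcγ : lam + Real.sqrt (lam⁻¹ ^ 2 - 1) ≤ cγ)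
    (A : Matrix (Fin 1 ⊕ Fin m) (Fin 1 ⊕ Fin m) ℝ)
    (hA : A = Matrix.fromBlocks (Matrix.of fun _ _ => cγ) 0 (Matrix.of fun i _ => b i) M) :
    (∀ ξ : Fin 1 ⊕ Fin m → ℝ, lam / 2 * (ξ ⬝ᵥ ξ) ≤ ξ ⬝ᵥ A.mulVec ξ) ∧ IsUnit A := by
  have hcoercive : ∀ ξ : Fin 1 ⊕ Fin m → ℝ, lam / 2 * (ξ ⬝ᵥ ξ) ≤ ξ ⬝ᵥ A.mulVec ξ := by
    intro ξ
    rw [← Sum.elim_comp_inl_inr ξ, hA, sumElim_dotProduct_fromBlocks_mulVec_sumElim_of_fin_one,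
      sumElim_dotProduct_sumElim]
    set ζ := ξ ∘ Sum.inr
    have hsq : (ξ ∘ Sum.inl) ⬝ᵥ (ξ ∘ Sum.inl) = ξ (Sum.inl 0) ^ 2 := by
      simp only [dotProduct, Fin.sum_univ_one, Function.comp_apply, sq]
    have hCS : (ζ ⬝ᵥ b) ^ 2 ≤ ζ ⬝ᵥ ζ :=
      (dotProduct_sq_le_dotProduct_self_mul_dotProduct_self ζ b).trans
        (mul_le_of_le_one_right (dotProduct_self_star_nonneg ζ) hb)
    rw [hsq]
    exact half_mul_sq_add_le_of_one_add_sq_le hlam0 (one_add_sq_le_two_mul_mul hlam0 hcγ) hCS (hM ζ)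
  exact ⟨hcoercive, isUnit_of_coercive (half_pos hlam0) hcoercive⟩

theorem stmt6 (m : ℕ) (M : Matrix (Fin m) (Fin m) ℝ) (lam : ℝ)
    (hlam0 : 0 < lam) (hlam1 : lam ≤ 1)
    (hM : ∀ ζ : Fin m → ℝ, lam * (ζ ⬝ᵥ ζ) ≤ ζ ⬝ᵥ M.mulVec ζ)
    (b : Fin m → ℝ) (hb : b ⬝ᵥ b ≤ 1)
    (cγ : ℝ) (hcγ : lam + Real.sqrt (lam⁻¹ ^ 2 - 1) ≤ cγ)
    (A : Matrix (Fin 1 ⊕ Fin m) (Fin 1 ⊕ Fin m) ℝ)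
    (hA : A = Matrix.fromBlocks (Matrix.of fun _ _ => cγ) 0 (Matrix.of fun i _ => b i) M) :
    (∀ ξ : Fin 1 ⊕ Fin m → ℝ, lam / 2 * (ξ ⬝ᵥ ξ) ≤ ξ ⬝ᵥ A.mulVec ξ) ∧ IsUnit A :=
  stmt6_general m M lam hlam0 hM b hb cγ hcγ A hA
end

section
/- Let $\Pi$ be a nonempty set, $J_r, J_c : \Pi \to \mathbb{R}$, and $\lambda^* \geq 0$ such that $J_r^\pi + \lambda^* J_c^\pi \leq v(0)$ for all $\pi \in \Pi$, where $v(0) = J_r^{\pi^*}$ for some $\pi^* \in \Pi$ with $J_c^{\pi^*} \geq 0$. Fix $C \geq 2\lambda^*$ with $C > 0$, and suppose $\pi \in \Pi$ and $\zeta > 0$ satisfy $J_r^{\pi^*} - J_r^\pi + C \cdot (-J_c^\pi) \leq \zeta$. Then $-J_c^\pi \leq 2\zeta / C$. -/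
theorem stmt10 {P : Type*} [Nonempty P]
    (Jr Jc : P → ℝ) (lstar : ℝ) (hlstar : 0 ≤ lstar)
    (πstar : P) (hfeas : 0 ≤ Jc πstar)
    (hdual : ∀ π : P, Jr π + lstar * Jc π ≤ Jr πstar)
    (C : ℝ) (hC : 2 * lstar ≤ C) (hCpos : 0 < C)
    (π : P) (ζ : ℝ) (hζ : 0 < ζ)
    (hgap : Jr πstar - Jr π + C * (-(Jc π)) ≤ ζ) :
    -(Jc π) ≤ 2 * ζ / C := by
  have h := hdual π
  rw [le_div_iff₀ hCpos]
  nlinarith [mul_pos hCpos hζ]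
end

section
/- Let $\sigma, \tau > 0$ and $C_1 > 0$, and suppose vectors $g^j \in \mathbb{R}^n$ (random) satisfy $\mathbb{E}\|g^j - \mu\|^2 \leq C_1 \tau \sigma^2 / 2^j$ for all $j \geq 0$, where $\mu \in \mathbb{R}^n$. Let $Q$ be geometric with $\Pr\{Q=j\}=2^{-j}$, independent of the $g^j$, and define $g_{\mathrm{MLMC}} = g^0 + 2^Q(g^Q - g^{Q-1})\mathbf{1}\{2^Q \leq T_{\max}\}$. Then $\mathbb{E}\|g_{\mathrm{MLMC}} - \mu\|^2 \leq C_1\tau\sigma^2\left(2 + 12\lfloor\log_2 T_{\max}\rfloor\right)$. -/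
/-!
Split `g_MLMC - μ = (g⁰ - μ) + Y` with `‖a + b‖² ≤ 2(‖a‖² + ‖b‖²)`. The correction `Y` is nonzero only
on one level `Q = j` with `1 ≤ j ≤ ⌊log₂ T_max⌋`, where `‖Y‖² = 4ʲ ‖gʲ - gʲ⁻¹‖²`. By independence of
`Q` and the `gʲ`, that level contributes `2⁻ʲ · 4ʲ 𝔼‖gʲ - gʲ⁻¹‖² ≤ 2ʲ · 2(C₁τσ²/2ʲ + C₁τσ²/2ʲ⁻¹) = 6 C₁τσ²`.
-/

open MeasureTheory ProbabilityTheory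

section NormSq

variable {E : Type*} [NormedAddCommGroup E]

lemma norm_add_sq_le (a b : E) : ‖a + b‖ ^ 2 ≤ 2 * (‖a‖ ^ 2 + ‖b‖ ^ 2) :=
  (pow_le_pow_left₀ (norm_nonneg _) (norm_add_le a b) 2).trans add_sq_le

lemma norm_sub_sq_le (a b m : E) : ‖a - b‖ ^ 2 ≤ 2 * (‖a - m‖ ^ 2 + ‖b - m‖ ^ 2) := by
  simpa only [sub_add_sub_cancel, norm_sub_rev m b] using norm_add_sq_le (a - m) (m - b)

variable {Ω : Type*} [MeasurableSpace Ω] {μ : Measure Ω} {X Y : Ω → E} {m : E}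

lemma integrable_norm_sub_sq (hX : AEStronglyMeasurable X μ) (hY : AEStronglyMeasurable Y μ)
    (hXm : Integrable (fun ω => ‖X ω - m‖ ^ 2) μ) (hYm : Integrable (fun ω => ‖Y ω - m‖ ^ 2) μ) :
    Integrable (fun ω => ‖X ω - Y ω‖ ^ 2) μ :=
  ((hXm.add hYm).const_mul 2).mono' ((hX.sub hY).norm.pow 2) <| .of_forall fun ω => by
    rw [Real.norm_of_nonneg (by positivity)]
    exact norm_sub_sq_le _ _ m

lemma integral_norm_sub_sq_le (hXm : Integrable (fun ω => ‖X ω - m‖ ^ 2) μ)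
    (hYm : Integrable (fun ω => ‖Y ω - m‖ ^ 2) μ) :
    ∫ ω, ‖X ω - Y ω‖ ^ 2 ∂μ ≤ 2 * (∫ ω, ‖X ω - m‖ ^ 2 ∂μ + ∫ ω, ‖Y ω - m‖ ^ 2 ∂μ) := by
  calc ∫ ω, ‖X ω - Y ω‖ ^ 2 ∂μ ≤ ∫ ω, 2 * (‖X ω - m‖ ^ 2 + ‖Y ω - m‖ ^ 2) ∂μ :=
        integral_mono_of_nonneg (.of_forall fun _ => by positivity) ((hXm.add hYm).const_mul 2)
          (.of_forall fun ω => norm_sub_sq_le _ _ m)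
    _ = _ := by rw [integral_const_mul, integral_add hXm hYm]

end NormSq

lemma norm_sq_mlmc_correction_le {E : Type*} [NormedAddCommGroup E] [NormedSpace ℝ E]
    (g : ℕ → E) (q T : ℕ) :
    ‖if 2 ^ q ≤ T then (2 : ℝ) ^ q • (g q - g (q - 1)) else 0‖ ^ 2
      ≤ ∑ j ∈ Finset.Icc 1 (Nat.log 2 T), if q = j then (4 : ℝ) ^ j * ‖g j - g (j - 1)‖ ^ 2 else 0 := by
  rw [Finset.sum_ite_eq]
  split_ifs with hpow hmem
  · rw [norm_smul, mul_pow, Real.norm_of_nonneg (by positivity), ← pow_mul, mul_comm q, pow_mul]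
    norm_num
  · -- level `q = 0` is `g 0 - g (0 - 1) = 0`, since `0 - 1 = 0` in `ℕ`
    have hq : q = 0 := by
      have := Nat.le_log_of_pow_le one_lt_two hpow
      simp only [Finset.mem_Icc, not_and_or, not_le] at hmem
      omega
    simp [hq]
  · simp only [norm_zero, ne_eq, OfNat.ofNat_ne_zero, not_false_eq_true, zero_pow]
    positivity
  · simp

namespace ProbabilityTheory

lemma IndepFun.integral_indicator_preimage {Ω α β : Type*} [MeasurableSpace Ω] [MeasurableSpace α]
    [MeasurableSpace β] {μ : Measure Ω} {Q : Ω → α} {G : Ω → β} {ψ : β → ℝ}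
    (hQG : IndepFun Q G μ) (hQ : Measurable Q) (hG : AEMeasurable G μ)
    (hψ : AEStronglyMeasurable ψ (μ.map G)) {S : Set α} (hS : MeasurableSet S) :
    ∫ ω, (Q ⁻¹' S).indicator (fun ω => ψ (G ω)) ω ∂μ = μ.real (Q ⁻¹' S) * ∫ ω, ψ (G ω) ∂μ := by
  have hprod : (Q ⁻¹' S).indicator (fun ω => ψ (G ω)) = (S.indicator 1 ∘ Q) * (ψ ∘ G) := by
    ext ω
    by_cases h : Q ω ∈ S <;> simp [h]
  have hind : S.indicator 1 ∘ Q = (Q ⁻¹' S).indicator (1 : Ω → ℝ) := by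
    ext ω
    by_cases h : Q ω ∈ S <;> simp [h]
  rw [hprod, hQG.integral_comp_mul_comp hQ.aemeasurable hG
    (measurable_one.indicator hS).aestronglyMeasurable hψ, hind, integral_indicator_one (hQ hS)]
  rfl

end ProbabilityTheory

lemma integral_indicator_mlmc_level_le {Ω E : Type*} [MeasurableSpace Ω] {μ : Measure Ω}
    [NormedAddCommGroup E] [MeasurableSpace E] [BorelSpace E] [SecondCountableTopology E]
    {g : ℕ → Ω → E} {m : E} {c : ℝ} (hgmeas : ∀ j, Measurable (g j))
    (hgsqint : ∀ j, Integrable (fun ω => ‖g j ω - m‖ ^ 2) μ)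
    (hglevel : ∀ j, ∫ ω, ‖g j ω - m‖ ^ 2 ∂μ ≤ c / 2 ^ j)
    {Q : Ω → ℕ} (hQmeas : Measurable Q)
    (hQlaw : ∀ j, 1 ≤ j → μ {ω | Q ω = j} = ENNReal.ofReal ((2 : ℝ)⁻¹ ^ j))
    (hindep : IndepFun Q (fun ω j => g j ω) μ) {j : ℕ} (hj : 1 ≤ j) :
    ∫ ω, (Q ⁻¹' {j}).indicator (fun ω => (4 : ℝ) ^ j * ‖g j ω - g (j - 1) ω‖ ^ 2) ω ∂μ
      ≤ 6 * c := by
  have hψ : Measurable fun v : ℕ → E => (4 : ℝ) ^ j * ‖v j - v (j - 1)‖ ^ 2 :=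
    (((measurable_pi_apply j).sub (measurable_pi_apply (j - 1))).norm.pow_const 2).const_mul _
  have hfactor : ∫ ω, (Q ⁻¹' {j}).indicator
        (fun ω => (4 : ℝ) ^ j * ‖g j ω - g (j - 1) ω‖ ^ 2) ω ∂μ
      = (2 : ℝ)⁻¹ ^ j * ((4 : ℝ) ^ j * ∫ ω, ‖g j ω - g (j - 1) ω‖ ^ 2 ∂μ) := by
    rw [hindep.integral_indicator_preimage hQmeas (measurable_pi_lambda _ hgmeas).aemeasurable
      hψ.aestronglyMeasurable (measurableSet_singleton j), measureReal_def,
      show Q ⁻¹' {j} = {ω | Q ω = j} from rfl, hQlaw j hj, ENNReal.toReal_ofReal (by positivity),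
      integral_const_mul]
  obtain ⟨i, rfl⟩ := Nat.exists_eq_add_of_le' hj
  rw [hfactor, Nat.add_sub_cancel]
  calc (2 : ℝ)⁻¹ ^ (i + 1) * ((4 : ℝ) ^ (i + 1) * ∫ ω, ‖g (i + 1) ω - g i ω‖ ^ 2 ∂μ)
      ≤ (2 : ℝ)⁻¹ ^ (i + 1) * ((4 : ℝ) ^ (i + 1) * (2 * (c / 2 ^ (i + 1) + c / 2 ^ i))) := by
        gcongr
        exact (integral_norm_sub_sq_le (hgsqint _) (hgsqint _)).trans
          (by gcongr <;> exact hglevel _)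
    _ = 6 * c := by
        rw [show (4 : ℝ) = 2 * 2 by norm_num, mul_pow, inv_pow, pow_succ]
        field_simp
        ring

theorem stmt18_general {Ω : Type*} [MeasurableSpace Ω] (μ : Measure Ω)
    (n : ℕ) (σ τ C1 : ℝ)
    (g : ℕ → Ω → EuclideanSpace ℝ (Fin n)) (μvec : EuclideanSpace ℝ (Fin n))
    (hgmeas : ∀ j, Measurable (g j))
    (hgsqint : ∀ j, Integrable (fun ω => ‖g j ω - μvec‖ ^ 2) μ)
    (hglevel : ∀ j, (∫ ω, ‖g j ω - μvec‖ ^ 2 ∂μ) ≤ C1 * τ * σ ^ 2 / 2 ^ j)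
    (Q : Ω → ℕ) (hQmeas : Measurable Q)
    (hQlaw : ∀ j, 1 ≤ j → μ {ω | Q ω = j} = ENNReal.ofReal ((2 : ℝ)⁻¹ ^ j))
    (hindep : ProbabilityTheory.IndepFun Q (fun ω => fun j => g j ω) μ)
    (Tmax : ℕ) :
    (∫ ω, ‖g 0 ω + (if 2 ^ Q ω ≤ Tmax then
          ((2 : ℝ) ^ Q ω) • (g (Q ω) ω - g (Q ω - 1) ω) else 0) - μvec‖ ^ 2 ∂μ)
      ≤ C1 * τ * σ ^ 2 * (2 + 12 * (Nat.log 2 Tmax : ℝ)) := by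
  set c := C1 * τ * σ ^ 2
  set L := Nat.log 2 Tmax
  set level : ℕ → Ω → ℝ := fun j =>
    (Q ⁻¹' {j}).indicator fun ω => (4 : ℝ) ^ j * ‖g j ω - g (j - 1) ω‖ ^ 2 with hlevel_def
  have hlevel_int (j : ℕ) : Integrable (level j) μ :=
    ((integrable_norm_sub_sq (hgmeas j).aestronglyMeasurable (hgmeas (j - 1)).aestronglyMeasurable
      (hgsqint j) (hgsqint (j - 1))).const_mul _).indicator (hQmeas (measurableSet_singleton j))
  have hpointwise (ω : Ω) : ‖g 0 ω + (if 2 ^ Q ω ≤ Tmax then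
      ((2 : ℝ) ^ Q ω) • (g (Q ω) ω - g (Q ω - 1) ω) else 0) - μvec‖ ^ 2
      ≤ 2 * (‖g 0 ω - μvec‖ ^ 2 + ∑ j ∈ Finset.Icc 1 L, level j ω) := by
    classical
    rw [add_sub_right_comm]
    refine (norm_add_sq_le _ _).trans ?_
    gcongr
    simpa only [hlevel_def, Set.indicator_apply, Set.mem_preimage, Set.mem_singleton_iff]
      using norm_sq_mlmc_correction_le (fun j => g j ω) (Q ω) Tmax
  calc _ ≤ ∫ ω, 2 * (‖g 0 ω - μvec‖ ^ 2 + ∑ j ∈ Finset.Icc 1 L, level j ω) ∂μ :=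
        integral_mono_of_nonneg (.of_forall fun _ => by positivity)
          (((hgsqint 0).add (integrable_finsetSum _ fun j _ => hlevel_int j)).const_mul 2)
          (.of_forall hpointwise)
    _ = 2 * (∫ ω, ‖g 0 ω - μvec‖ ^ 2 ∂μ + ∑ j ∈ Finset.Icc 1 L, ∫ ω, level j ω ∂μ) := by
        rw [integral_const_mul, integral_add (hgsqint 0) (integrable_finsetSum _ fun j _ =>
          hlevel_int j), integral_finsetSum _ fun j _ => hlevel_int j]
    _ ≤ 2 * (c + ∑ _j ∈ Finset.Icc 1 L, 6 * c) := by
        gcongr with j hj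
        · simpa using hglevel 0
        · exact integral_indicator_mlmc_level_le hgmeas hgsqint hglevel hQmeas hQlaw hindep
            (Finset.mem_Icc.1 hj).1
    _ = c * (2 + 12 * (L : ℝ)) := by
        rw [Finset.sum_const, Nat.card_Icc, Nat.add_sub_cancel, nsmul_eq_mul]
        ring

theorem stmt18 {Ω : Type*} [MeasurableSpace Ω] (μ : Measure Ω) [IsProbabilityMeasure μ]
    (n : ℕ) (σ τ C1 : ℝ) (hσ : 0 < σ) (hτ : 0 < τ) (hC1 : 0 < C1)
    (g : ℕ → Ω → EuclideanSpace ℝ (Fin n)) (μvec : EuclideanSpace ℝ (Fin n))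
    (hgmeas : ∀ j, Measurable (g j))
    (hgsqint : ∀ j, Integrable (fun ω => ‖g j ω - μvec‖ ^ 2) μ)
    (hglevel : ∀ j, (∫ ω, ‖g j ω - μvec‖ ^ 2 ∂μ) ≤ C1 * τ * σ ^ 2 / 2 ^ j)
    (Q : Ω → ℕ) (hQmeas : Measurable Q)
    (hQlaw : ∀ j, 1 ≤ j → μ {ω | Q ω = j} = ENNReal.ofReal ((2 : ℝ)⁻¹ ^ j))
    (hindep : ProbabilityTheory.IndepFun Q (fun ω => fun j => g j ω) μ)
    (Tmax : ℕ) (hT : 1 ≤ Tmax)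
    (hMLMCsqint : Integrable (fun ω =>
      ‖g 0 ω + (if 2 ^ Q ω ≤ Tmax then ((2 : ℝ) ^ Q ω) • (g (Q ω) ω - g (Q ω - 1) ω) else 0)
        - μvec‖ ^ 2) μ) :
    (∫ ω, ‖g 0 ω + (if 2 ^ Q ω ≤ Tmax then
          ((2 : ℝ) ^ Q ω) • (g (Q ω) ω - g (Q ω - 1) ω) else 0) - μvec‖ ^ 2 ∂μ)
      ≤ C1 * τ * σ ^ 2 * (2 + 12 * (Nat.log 2 Tmax : ℝ)) :=
  stmt18_general μ n σ τ C1 g μvec hgmeas hgsqint hglevel Q hQmeas hQlaw hindep Tmax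
end
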